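/- arXiv:2510.05915 — 5 statements merged into one kernel-verified Lean document; each statement's English description precedes it below -/
import Mathlib

section
/- Let G be a graph with connected components G_1,...,G_t. Then the analytic spread of the binomial edge ideal satisfies ℓ(J_G) = ℓ(J_{G_1}) + ... + ℓ(J_{G_t}). -/
open MvPolynomial

/-- Transcendence degree of `L` over `K`: the supremum of cardinalities of
algebraically independent subsets. -/
noncomputable def trdeg (K : Type*) (L : Type*) [CommRing K] [CommRing L] [Algebra K L] :
    Cardinal :=
  ⨆ s : {s : Set L // AlgebraicIndependent K ((↑) : s → L)}, Cardinal.mk s.1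

/-- The edge binomials of a graph, viewed inside the fraction field of
`K[x_v, y_v : v ∈ V]` (the `Sum.inl` variables are the `x`s, `Sum.inr` the `y`s). -/
noncomputable def edgeBinoms (K : Type) [Field K] {V : Type} (G : SimpleGraph V) :
    Set (FractionRing (MvPolynomial (V ⊕ V) K)) :=
  {z | ∃ i j, G.Adj i j ∧
    z = algebraMap (MvPolynomial (V ⊕ V) K) (FractionRing (MvPolynomial (V ⊕ V) K))
      (X (Sum.inl i) * X (Sum.inr j) - X (Sum.inl j) * X (Sum.inr i))}

/-- The analytic spread of the binomial edge ideal `J_G`: the transcendence degree over `K`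
of the subfield generated by the edge binomials. -/
noncomputable def spread (K : Type) [Field K] {V : Type} (G : SimpleGraph V) : Cardinal :=
  trdeg K (IntermediateField.adjoin K (edgeBinoms K G))

/-- The connected component `c` of `G`, as a subgraph of `G` on the same vertex set
(all the edges of `G` between vertices of `c`). -/
def compSubgraph {V : Type} (G : SimpleGraph V) (c : G.ConnectedComponent) :
    SimpleGraph V where
  Adj i j := G.Adj i j ∧ G.connectedComponentMk i = c
  symm := by
    constructor
    intro i j ⟨hadj, hc⟩
    exact ⟨hadj.symm, by rw [SimpleGraph.ConnectedComponent.sound hadj.symm.reachable]; exact hc⟩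
  loopless := ⟨fun i h => G.irrefl h.1⟩

/-!
The edge binomials of a component `c` only involve the variables `x_v, y_v` with `v ∈ c`, and
these blocks of variables are pairwise disjoint. Polynomials in one block that are algebraically
independent over `K` stay independent over the polynomial ring in a disjoint block: this is flat
base change `K → K[W₂]` followed by the injective map `K[W₂] ⊗ K[W₁] → K[W₁ ∪ W₂]`. Hence bases
of the algebraic matroid chosen inside the components combine into a basis for the whole graph,
and the ranks, which are the transcendence degrees, add up.
-/

open Function Set AlgebraicIndependent TensorProduct

theorem AlgebraicIndependent.baseChange {ι K B S : Type*} [CommRing K] [CommRing B] [CommRing S]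
    [Algebra K B] [Algebra K S] [Module.Flat K B] {t : ι → S} (ht : AlgebraicIndependent K t) :
    AlgebraicIndependent B fun i ↦ (1 : B) ⊗ₜ[K] t i := by
  have key : (aeval fun i ↦ (1 : B) ⊗ₜ[K] t i).comp (algebraTensorAlgEquiv K B).toAlgHom =
      Algebra.TensorProduct.map (AlgHom.id B B) (aeval t) := by
    ext; simp
  have hinj : Injective ((aeval fun i ↦ (1 : B) ⊗ₜ[K] t i).comp
      (algebraTensorAlgEquiv K B).toAlgHom) :=
    key ▸ Module.Flat.lTensor_preserves_injective_linearMap (M := B) (aeval t).toLinearMap ht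
  exact (EquivLike.injective_comp (algebraTensorAlgEquiv K B) _).1 hinj

theorem AlgebraicIndependent.comap_matroid {R A B : Type*} [CommRing R] [CommRing A] [CommRing B]
    [Algebra R A] [Algebra R B] [FaithfulSMul R A] [FaithfulSMul R B]
    [NoZeroDivisors A] [NoZeroDivisors B] (f : A →ₐ[R] B) (hf : Injective f) :
    (matroid R B).comap f = matroid R A := by
  refine Matroid.ext_indep rfl fun I _ ↦ ?_
  rw [Matroid.comap_indep_iff, matroid_indep_iff, matroid_indep_iff]
  refine ⟨fun ⟨hI, hinj⟩ ↦ ?_, fun hI ↦ ⟨(hI.map' hf).image, hf.injOn⟩⟩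
  exact ((algebraicIndependent_equiv' (Equiv.Set.imageOfInjOn f I hinj) rfl).2 hI).of_comp f

universe u

namespace IntermediateField

variable {K : Type*} [Field K]

theorem trdeg_adjoin_eq_cRk {F : Type*} [Field F] [Algebra K F] (S : Set F) :
    Algebra.trdeg K (adjoin K S) = (matroid K F).cRk S := by
  have hE : Algebra.trdeg K (adjoin K S) = (matroid K F).cRk (adjoin K S : Set F) := by
    rw [← matroid_cRank_eq, ← comap_matroid (adjoin K S).val Subtype.val_injective,
      ← Matroid.cRk_ground, Matroid.cRk_comap]
    simp
  have hcl : (adjoin K S : Set F) ⊆ (matroid K F).closure S := by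
    intro x hx
    rw [matroid_closure_eq]
    exact isAlgebraic_adjoin_iff.1 (isAlgebraic_algebraMap (⟨x, hx⟩ : adjoin K S))
  rw [hE]
  exact le_antisymm ((Matroid.cRk_mono _ hcl).trans (Matroid.cRk_closure _ S).le)
    (Matroid.cRk_mono _ (subset_adjoin K S))

theorem trdeg_adjoin_image_eq_cRk {F A : Type u} [Field F] [Algebra K F] [CommRing A]
    [IsDomain A] [Algebra K A] [Algebra A F] [IsScalarTower K A F]
    (hA : Injective (algebraMap A F)) (P : Set A) :
    Algebra.trdeg K (adjoin K (algebraMap A F '' P)) = (matroid K A).cRk P := by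
  rw [trdeg_adjoin_eq_cRk, ← comap_matroid (IsScalarTower.toAlgHom K A F) hA, Matroid.cRk_comap]
  rfl

end IntermediateField

namespace MvPolynomial

variable {σ K : Type*} [Field K]

theorem algebraicIndependent_supported_of_disjoint {ι : Type*} {W₁ W₂ : Set σ}
    (h : Disjoint W₁ W₂) {t : ι → MvPolynomial σ K} (ht : AlgebraicIndependent K t)
    (hsupp : ∀ i, t i ∈ supported K W₁) : AlgebraicIndependent (supported K W₂) t := by
  rw [supported_eq_range_rename] at hsupp
  choose t' ht' using hsupp
  have ht'_eq : rename (↑) ∘ t' = t := _root_.funext ht'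
  have hX : AlgebraicIndependent (supported K W₂) fun w : W₁ ↦ (X w : MvPolynomial σ K) :=
    (algebraicIndependent_X σ K).adjoin_of_disjoint h.symm
  have hinj : Injective ((aeval fun w : W₁ ↦ (X w : MvPolynomial σ K)).comp
      (algebraTensorAlgEquiv K (supported K W₂)).toAlgHom) :=
    (EquivLike.injective_comp (algebraTensorAlgEquiv K _) _).2 hX
  have ht'_indep : AlgebraicIndependent K t' :=
    AlgebraicIndependent.of_comp (rename ((↑) : W₁ → σ)) (by rwa [ht'_eq])
  -- `t` factors as `1 ⊗ t'` followed by `K[W₂] ⊗ K[W₁] ≃ K[W₂][W₁] → K[σ]`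
  convert ht'_indep.baseChange.map' hinj
  rw [← ht'_eq]
  refine _root_.funext fun i ↦ ?_
  simp [aeval_map_algebraMap, rename_eq_aeval]
  rfl

theorem algebraicIndependent_sumElim_of_disjoint {ι₁ ι₂ : Type*} {W₁ W₂ : Set σ}
    (h : Disjoint W₁ W₂) {t₁ : ι₁ → MvPolynomial σ K} {t₂ : ι₂ → MvPolynomial σ K}
    (ht₁ : AlgebraicIndependent K t₁) (ht₂ : AlgebraicIndependent K t₂)
    (h₁ : ∀ i, t₁ i ∈ supported K W₁) (h₂ : ∀ i, t₂ i ∈ supported K W₂) :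
    AlgebraicIndependent K (Sum.elim t₁ t₂) := by
  have hle : Algebra.adjoin K (range t₂) ≤ supported K W₂ :=
    Algebra.adjoin_le (range_subset_iff.2 h₂)
  refine sumElim_iff.2 ⟨ht₂, ?_⟩
  exact (algebraicIndependent_supported_of_disjoint h ht₁ h₁).of_ringHom_of_comp_eq
    (Subalgebra.inclusion hle) (RingHom.id _) (Subalgebra.inclusion_injective hle) rfl

theorem cRk_union_of_disjoint {W₁ W₂ : Set σ} (h : Disjoint W₁ W₂)
    {P₁ P₂ : Set (MvPolynomial σ K)} (h₁ : P₁ ⊆ supported K W₁) (h₂ : P₂ ⊆ supported K W₂) :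
    (matroid K (MvPolynomial σ K)).cRk (P₁ ∪ P₂) =
      (matroid K (MvPolynomial σ K)).cRk P₁ + (matroid K (MvPolynomial σ K)).cRk P₂ := by
  obtain ⟨I₁, hI₁⟩ := (matroid K (MvPolynomial σ K)).exists_isBasis P₁ (subset_univ _)
  obtain ⟨I₂, hI₂⟩ := (matroid K (MvPolynomial σ K)).exists_isBasis P₂ (subset_univ _)
  have hind : AlgebraicIndependent K
      (Sum.elim ((↑) : I₁ → MvPolynomial σ K) ((↑) : I₂ → MvPolynomial σ K)) :=
    algebraicIndependent_sumElim_of_disjoint h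
      hI₁.indep hI₂.indep (fun i ↦ h₁ (hI₁.subset i.2)) (fun i ↦ h₂ (hI₂.subset i.2))
  have hdisj : Disjoint I₁ I₂ := disjoint_left.2 fun x hx₁ hx₂ ↦
    Sum.inl_ne_inr (hind.injective (a₁ := .inl ⟨x, hx₁⟩) (a₂ := .inr ⟨x, hx₂⟩) rfl)
  have hunion : (matroid K (MvPolynomial σ K)).Indep (I₁ ∪ I₂) := by
    have := hind.to_subtype_range
    rwa [Sum.elim_range, Subtype.range_coe, Subtype.range_coe] at this
  rw [← (hI₁.union_isBasis_union hI₂ hunion).cardinalMk_eq_cRk, ← hI₁.cardinalMk_eq_cRk,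
    ← hI₂.cardinalMk_eq_cRk, Cardinal.mk_union_of_disjoint hdisj]

theorem cRk_biUnion_of_subset_supported_fiber {ι : Type*} (π : σ → ι)
    (P : ι → Set (MvPolynomial σ K)) (hP : ∀ c, P c ⊆ supported K (π ⁻¹' {c})) (s : Finset ι) :
    (matroid K (MvPolynomial σ K)).cRk (⋃ c ∈ s, P c) =
      ∑ c ∈ s, (matroid K (MvPolynomial σ K)).cRk (P c) := by
  classical
  induction s using Finset.induction_on with
  | empty => simp [← (matroid K (MvPolynomial σ K)).empty_indep.cRk_eq_cardinalMk]
  | insert a s ha ih =>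
    rw [Finset.set_biUnion_insert, Finset.sum_insert ha, ← ih]
    refine cRk_union_of_disjoint (W₂ := π ⁻¹' s) ?_ (hP a) ?_
    · exact Disjoint.preimage π (by simpa using ha)
    · exact iUnion₂_subset fun c hc ↦
        (hP c).trans (supported_mono (preimage_mono (by simpa using hc)))

theorem cRk_iUnion_of_subset_supported_fiber {ι : Type*} [Finite ι] (π : σ → ι)
    (P : ι → Set (MvPolynomial σ K)) (hP : ∀ c, P c ⊆ supported K (π ⁻¹' {c})) :
    (matroid K (MvPolynomial σ K)).cRk (⋃ c, P c) =
      ∑ᶠ c, (matroid K (MvPolynomial σ K)).cRk (P c) := by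
  cases nonempty_fintype ι
  simpa [finsum_eq_sum_of_fintype] using cRk_biUnion_of_subset_supported_fiber π P hP Finset.univ

end MvPolynomial

section BinomialEdgeIdeal

variable (K : Type) [Field K] {V : Type} (G : SimpleGraph V)

def edgePolys : Set (MvPolynomial (V ⊕ V) K) :=
  {p | ∃ i j, G.Adj i j ∧ p = X (Sum.inl i) * X (Sum.inr j) - X (Sum.inl j) * X (Sum.inr i)}

theorem edgeBinoms_eq_image :
    edgeBinoms K G = algebraMap _ (FractionRing (MvPolynomial (V ⊕ V) K)) '' edgePolys K G := by
  ext z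
  simp only [edgeBinoms, edgePolys, mem_image, mem_ofPred_eq]
  constructor
  · rintro ⟨i, j, hij, rfl⟩
    exact ⟨_, ⟨i, j, hij, rfl⟩, rfl⟩
  · rintro ⟨_, ⟨i, j, hij, rfl⟩, rfl⟩
    exact ⟨i, j, hij, rfl⟩

theorem spread_eq_cRk : spread K G = (matroid K (MvPolynomial (V ⊕ V) K)).cRk (edgePolys K G) := by
  rw [spread, edgeBinoms_eq_image]
  exact IntermediateField.trdeg_adjoin_image_eq_cRk (IsFractionRing.injective _ _) _

variable {K}

theorem edgePolys_eq_iUnion : edgePolys K G = ⋃ c, edgePolys K (compSubgraph G c) := by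
  ext p
  simp only [edgePolys, mem_iUnion, mem_ofPred_eq]
  constructor
  · rintro ⟨i, j, hij, rfl⟩
    exact ⟨_, i, j, ⟨hij, rfl⟩, rfl⟩
  · rintro ⟨c, i, j, ⟨hij, -⟩, rfl⟩
    exact ⟨i, j, hij, rfl⟩

theorem edgePolys_compSubgraph_subset_supported (c : G.ConnectedComponent) :
    edgePolys K (compSubgraph G c) ⊆
      supported K ((G.connectedComponentMk ∘ Sum.elim id id) ⁻¹' {c}) := by
  rintro _ ⟨i, j, ⟨hij, hi⟩, rfl⟩
  have hj : G.connectedComponentMk j = c :=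
    (SimpleGraph.ConnectedComponent.sound hij.reachable).symm.trans hi
  exact sub_mem (mul_mem (X_mem_supported.2 hi) (X_mem_supported.2 hj))
    (mul_mem (X_mem_supported.2 hj) (X_mem_supported.2 hi))

end BinomialEdgeIdeal

theorem spread_eq_sum_components_general
    (K : Type) [Field K] (n : ℕ) (G : SimpleGraph (Fin n)) :
    spread K G = ∑ᶠ c : G.ConnectedComponent, spread K (compSubgraph G c) := by
  simp only [spread_eq_cRk]
  rw [edgePolys_eq_iUnion]
  exact cRk_iUnion_of_subset_supported_fiber _ _ (edgePolys_compSubgraph_subset_supported G)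

/-- The analytic spread of `J_G` is the sum of the analytic spreads of the binomial edge
ideals of the connected components of `G`. -/
theorem spread_eq_sum_components
    (K : Type) [Field K] [Infinite K] (n : ℕ) (G : SimpleGraph (Fin n)) :
    spread K G = ∑ᶠ c : G.ConnectedComponent, spread K (compSubgraph G c) :=
  spread_eq_sum_components_general K n G
end

section
/- For the complete graph K_n on n ≥ 2 vertices, the analytic spread of the binomial edge ideal satisfies ℓ(J_{K_n}) = 2n − 3. -/
open MvPolynomial

open Cardinal

/-! For two vertices `a ≠ b`, the minors `[a j] = x_a y_j - x_j y_a` (`j ≠ a`) and `[b j]`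
(`j ≠ a, b`) are `2n - 3` algebraically independent elements: a specialization of the variables
sends them to distinct variables. By the Plücker relation `[i j][a b] = [a i][b j] - [a j][b i]`
every other minor lies in the field they generate, so they form a transcendence basis of the
field generated by all minors. -/

universe u v w

theorem AlgebraicIndependent.lift_trdeg_adjoin_range {K : Type u} {F : Type v} {ι : Type w}
    [Field K] [Field F] [Algebra K F] {g : ι → F} (hg : AlgebraicIndependent K g) :
    lift.{w} (Algebra.trdeg K (IntermediateField.adjoin K (Set.range g))) = lift.{v} #ι := by
  set L := IntermediateField.adjoin K (Set.range g)
  let g' : ι → L := fun i => ⟨g i, IntermediateField.subset_adjoin K _ ⟨i, rfl⟩⟩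
  have hg' : AlgebraicIndependent K g' :=
    (AlgHom.algebraicIndependent_iff L.val Subtype.val_injective).mp hg
  have htop : IntermediateField.adjoin K (Set.range g') = ⊤ := by
    apply IntermediateField.lift_injective
    rw [IntermediateField.lift_adjoin, IntermediateField.lift_top, ← Set.range_comp]
    rfl
  have halg : Algebra.IsAlgebraic (Algebra.adjoin K (Set.range g')) L := by
    rw [← IntermediateField.isAlgebraic_adjoin_iff_top]
    exact ⟨fun x => isAlgebraic_algebraMap
      (⟨x, htop ▸ IntermediateField.mem_top⟩ : IntermediateField.adjoin K (Set.range g'))⟩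
  exact (hg'.isTranscendenceBasis_iff_isAlgebraic.mpr halg).lift_cardinalMk_eq_trdeg.symm

section Minors

variable (K : Type*) [Field K] {V : Type*}

noncomputable def minor (i j : V) : MvPolynomial (V ⊕ V) K :=
  X (Sum.inl i) * X (Sum.inr j) - X (Sum.inl j) * X (Sum.inr i)

noncomputable def starMinors (a b : V) :
    {j // j ≠ a} ⊕ {j // j ≠ a ∧ j ≠ b} → MvPolynomial (V ⊕ V) K :=
  Sum.elim (fun j => minor K a j) (fun j => minor K b j)

variable {K}

@[simp]
theorem minor_self (i : V) : minor K i i = 0 := sub_self _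

theorem minor_swap (i j : V) : minor K j i = -minor K i j := by
  simp only [minor]; ring

theorem minor_mul_minor (a b i j : V) :
    minor K i j * minor K a b = minor K a i * minor K b j - minor K a j * minor K b i := by
  simp only [minor]; ring

theorem minor_ne_zero {a b : V} (hab : a ≠ b) : minor K a b ≠ 0 := by
  classical
  intro h
  have := congrArg (eval (Sum.elim (fun t => if t = a then (1 : K) else 0)
    (fun t => if t = b then 1 else 0))) h
  simp [minor, hab, hab.symm] at this

local notation "P" => MvPolynomial (V ⊕ V) K
local notation "FF" => FractionRing (MvPolynomial (V ⊕ V) K)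

theorem algebraicIndependent_starMinors {a b : V} (hab : a ≠ b) :
    AlgebraicIndependent K (starMinors K a b) := by
  classical
  let x : V ⊕ V → FF := fun s => algebraMap P FF (X s)
  -- `(x_a, y_a, x_b) ↦ (1, 0, 0)` and `x_j ↦ -x_j / y_b` send `[a j] ↦ y_j` and `[b j] ↦ x_j`.
  let v : V ⊕ V → FF := Sum.elim
    (fun i => if i = a then 1 else if i = b then 0 else -x (Sum.inl i) / x (Sum.inr b))
    (fun i => if i = a then 0 else x (Sum.inr i))
  let e : {j // j ≠ a} ⊕ {j // j ≠ a ∧ j ≠ b} → V ⊕ V :=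
    Sum.elim (fun j => Sum.inr j.1) (fun j => Sum.inl j.1)
  have he : Function.Injective e := by
    rintro (i | i) (j | j) h <;> simp_all [e, Subtype.ext_iff]
  have hspec : aeval v ∘ starMinors K a b = x ∘ e := by
    funext j
    rcases j with j | ⟨j, hja, hjb⟩
    · simp [starMinors, minor, v, e, x, j.2]
    · simp [starMinors, minor, v, e, x, hja, hjb, hab.symm]
  apply AlgebraicIndependent.of_comp (aeval v)
  rw [hspec]
  exact ((algebraicIndependent_X (V ⊕ V) K).comp e he).map'
    (f := IsScalarTower.toAlgHom K P FF) (IsFractionRing.injective P FF)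

theorem minor_mem_adjoin_starMinors {a b : V} (hab : a ≠ b) (i j : V) :
    algebraMap P FF (minor K i j) ∈
      IntermediateField.adjoin K (Set.range (algebraMap P FF ∘ starMinors K a b)) := by
  set M := IntermediateField.adjoin K (Set.range (algebraMap P FF ∘ starMinors K a b))
  have hmem : ∀ s, algebraMap P FF (starMinors K a b s) ∈ M :=
    fun s => IntermediateField.subset_adjoin K _ ⟨s, rfl⟩
  have ha : ∀ j, algebraMap P FF (minor K a j) ∈ M := by
    intro j
    by_cases hja : j = a
    · simp [hja]
    · exact hmem (Sum.inl ⟨j, hja⟩)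
  have hb : ∀ j, algebraMap P FF (minor K b j) ∈ M := by
    intro j
    by_cases hja : j = a
    · rw [hja, minor_swap, map_neg]
      exact neg_mem (ha b)
    by_cases hjb : j = b
    · simp [hjb]
    · exact hmem (Sum.inr ⟨j, hja, hjb⟩)
  have hab0 : algebraMap P FF (minor K a b) ≠ 0 :=
    IsFractionRing.to_map_ne_zero_of_mem_nonZeroDivisors
      (mem_nonZeroDivisors_of_ne_zero (minor_ne_zero hab))
  have hplucker : algebraMap P FF (minor K i j) =
      (algebraMap P FF (minor K a i) * algebraMap P FF (minor K b j) -
        algebraMap P FF (minor K a j) * algebraMap P FF (minor K b i)) /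
        algebraMap P FF (minor K a b) := by
    rw [eq_div_iff hab0, ← map_mul, minor_mul_minor, map_sub, map_mul, map_mul]
  rw [hplucker]
  exact div_mem (sub_mem (mul_mem (ha i) (hb j)) (mul_mem (ha j) (hb i))) (ha b)

end Minors

theorem card_starMinors_index {V : Type*} [Fintype V] [DecidableEq V] {a b : V} (hab : a ≠ b) :
    Fintype.card ({j // j ≠ a} ⊕ {j // j ≠ a ∧ j ≠ b}) = 2 * Fintype.card V - 3 := by
  have hpair : Fintype.card {j // j ≠ a ∧ j ≠ b} = Fintype.card V - 2 := by
    rw [Fintype.card_subtype, ← Finset.card_pair hab, ← Finset.card_compl]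
    congr 1
    ext j
    simp
  rw [Fintype.card_sum, Fintype.card_subtype_compl, Fintype.card_subtype_eq, hpair]
  omega

theorem spread_top {V : Type} [Fintype V] (K : Type) [Field K] (hV : 2 ≤ Fintype.card V) :
    spread K (⊤ : SimpleGraph V) = ((2 * Fintype.card V - 3 : ℕ) : Cardinal) := by
  classical
  obtain ⟨a, b, hab⟩ := Fintype.exists_pair_of_one_lt_card hV
  let g := algebraMap (MvPolynomial (V ⊕ V) K) (FractionRing (MvPolynomial (V ⊕ V) K)) ∘
    starMinors K a b
  have hg : AlgebraicIndependent K g :=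
    (algebraicIndependent_starMinors hab).map'
      (f := IsScalarTower.toAlgHom K _ (FractionRing (MvPolynomial (V ⊕ V) K)))
      (IsFractionRing.injective _ _)
  have hspan : IntermediateField.adjoin K (edgeBinoms K ⊤) =
      IntermediateField.adjoin K (Set.range g) := by
    refine le_antisymm (IntermediateField.adjoin_le_iff.mpr ?_)
      (IntermediateField.adjoin.mono _ _ _ ?_)
    · rintro _ ⟨i, j, -, rfl⟩
      exact minor_mem_adjoin_starMinors hab i j
    · rintro _ ⟨j | ⟨j, -, hjb⟩, rfl⟩
      · exact ⟨a, j, by simpa using j.2.symm, rfl⟩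
      · exact ⟨b, j, by simpa using hjb.symm, rfl⟩
  have htrdeg := hg.lift_trdeg_adjoin_range
  rw [lift_id, lift_id, mk_fintype, card_starMinors_index hab] at htrdeg
  rw [spread, hspan]
  exact htrdeg

theorem spread_completeGraph_general
    (K : Type) [Field K] (n : ℕ) (hn : 2 ≤ n) :
    spread K (⊤ : SimpleGraph (Fin n)) = ((2 * n - 3 : ℕ) : Cardinal) := by
  simpa using spread_top (V := Fin n) K (by simpa using hn)

/-- For the complete graph `Kₙ` on `n ≥ 2` vertices, `ℓ(J_{Kₙ}) = 2n − 3`. -/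
theorem spread_completeGraph
    (K : Type) [Field K] [Infinite K] (n : ℕ) (hn : 2 ≤ n) :
    spread K (⊤ : SimpleGraph (Fin n)) = ((2 * n - 3 : ℕ) : Cardinal) :=
  spread_completeGraph_general K n hn
end

section
/- Let G be a graph on n−1 ≥ 1 vertices and let G' be obtained from G by adding a leaf, i.e., a new vertex n together with a single edge {i, n} for some vertex i of G. Then ℓ(J_{G'}) = ℓ(J_G) + 1. -/
open MvPolynomial

/-!
Embedding `G` into `G'` renames variables, so it preserves the transcendence degree of the field
generated by the edge binomials. Up to sign, the binomial `x_i y_n - x_n y_i` of the new edge is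
the only generator involving `y_n`, and it is linear in `y_n` with coefficient `x_i ≠ 0`; since
`y_n` is transcendental over the field generated by all the other variables, so is the new
binomial over the field generated by the old ones. Adjoining one transcendental element raises
the transcendence degree by exactly one.
-/

open IntermediateField

section TranscendenceDegree

open Polynomial in
theorem RatFunc.trdeg_eq_one (K : Type*) [Field K] : Algebra.trdeg K (RatFunc K) = 1 := by
  have := IsLocalization.isAlgebraic (RatFunc K) (nonZeroDivisors K[X])
  rw [← trdeg_add_eq K K[X] (A := RatFunc K), Polynomial.trdeg_of_isDomain, trdeg_eq_zero,
    add_zero]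

variable {K E : Type*} [Field K] [Field E] [Algebra K E]

theorem IntermediateField.trdeg_adjoin_simple_of_transcendental {a : E}
    (ha : Transcendental K a) : Algebra.trdeg K K⟮a⟯ = 1 := by
  have := (RatFunc.algEquivOfTranscendental a ha).lift_trdeg_eq
  rwa [RatFunc.trdeg_eq_one, Cardinal.lift_one, eq_comm, Cardinal.lift_eq_one] at this

theorem IntermediateField.trdeg_adjoin_insert_of_transcendental {s : Set E} {a : E}
    (ha : Transcendental (adjoin K s) a) :
    Algebra.trdeg K (adjoin K (insert a s)) = Algebra.trdeg K (adjoin K s) + 1 := by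
  have : FaithfulSMul (adjoin K s) (adjoin K s)⟮a⟯ :=
    (faithfulSMul_iff_algebraMap_injective _ _).2
      (algebraMap (adjoin K s) (adjoin K s)⟮a⟯).injective
  have hF : adjoin K (insert a s) = restrictScalars K (adjoin K s)⟮a⟯ := by
    rw [adjoin_adjoin_left, Set.union_singleton]
  calc Algebra.trdeg K (adjoin K (insert a s))
      = Algebra.trdeg K (adjoin K s)⟮a⟯ := (equivOfEq hF).trdeg_eq
    _ = Algebra.trdeg K (adjoin K s) + Algebra.trdeg (adjoin K s) (adjoin K s)⟮a⟯ :=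
      (trdeg_add_eq K (adjoin K s)).symm
    _ = Algebra.trdeg K (adjoin K s) + 1 := by rw [trdeg_adjoin_simple_of_transcendental ha]

theorem IntermediateField.adjoin_union_pair_neg (s : Set E) (a : E) :
    adjoin K (s ∪ {a, -a}) = adjoin K (insert a s) := by
  refine le_antisymm (adjoin_le_iff.2 ?_) (adjoin.mono _ _ _ ?_)
  · rintro z (hz | rfl | rfl)
    · exact subset_adjoin K _ (Set.mem_insert_of_mem a hz)
    · exact subset_adjoin K _ (Set.mem_insert z s)
    · exact neg_mem (subset_adjoin K _ (Set.mem_insert _ s))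
  · exact Set.insert_subset (Or.inr (Or.inl rfl)) Set.subset_union_left

theorem Transcendental.algebraMap_mul_sub {y : E} (hy : Transcendental K y) {b : K} (hb : b ≠ 0)
    (c : K) : Transcendental K (algebraMap K E b * y - algebraMap K E c) := by
  intro h
  apply hy
  have := (h.add (isAlgebraic_algebraMap c)).smul b⁻¹
  rwa [sub_add_cancel, Algebra.smul_def, ← mul_assoc, ← map_mul, inv_mul_cancel₀ hb, map_one,
    one_mul] at this

end TranscendenceDegree

section EdgeBinomials

variable (K : Type) [Field K] {V W : Type}

noncomputable def edgeBinom (a b : V) : FractionRing (MvPolynomial (V ⊕ V) K) :=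
  algebraMap (MvPolynomial (V ⊕ V) K) _
    (X (Sum.inl a) * X (Sum.inr b) - X (Sum.inl b) * X (Sum.inr a))

theorem edgeBinoms_eq (G : SimpleGraph V) :
    edgeBinoms K G = {z | ∃ a b, G.Adj a b ∧ z = edgeBinom K a b} := rfl

theorem edgeBinom_swap (a b : V) : edgeBinom K b a = -edgeBinom K a b := by
  rw [edgeBinom, edgeBinom, ← map_neg, neg_sub, mul_comm (X (Sum.inl a)),
    mul_comm (X (Sum.inl b))]

theorem edgeBinoms_sup (G H : SimpleGraph V) :
    edgeBinoms K (G ⊔ H) = edgeBinoms K G ∪ edgeBinoms K H := by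
  ext z
  simp only [edgeBinoms_eq, SimpleGraph.sup_adj, Set.mem_ofPred_eq, Set.mem_union]
  grind

theorem edgeBinoms_fromEdgeSet_singleton {a b : V} (hab : a ≠ b) :
    edgeBinoms K (SimpleGraph.fromEdgeSet {s(a, b)}) = {edgeBinom K a b, -edgeBinom K a b} := by
  ext z
  simp only [edgeBinoms_eq, SimpleGraph.fromEdgeSet_adj, Set.mem_singleton_iff, Sym2.eq_iff,
    Set.mem_ofPred_eq, Set.mem_insert_iff]
  constructor
  · rintro ⟨i, j, ⟨(⟨rfl, rfl⟩ | ⟨rfl, rfl⟩), -⟩, rfl⟩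
    · exact Or.inl rfl
    · exact Or.inr (edgeBinom_swap K j i)
  · rintro (rfl | rfl)
    · exact ⟨a, b, ⟨Or.inl ⟨rfl, rfl⟩, hab⟩, rfl⟩
    · exact ⟨b, a, ⟨Or.inr ⟨rfl, rfl⟩, hab.symm⟩, (edgeBinom_swap K a b).symm⟩

noncomputable def fractionRingRename {σ τ : Type*} (f : σ → τ) (hf : Function.Injective f) :
    FractionRing (MvPolynomial σ K) →ₐ[K] FractionRing (MvPolynomial τ K) :=
  IsFractionRing.liftAlgHom (g := (IsScalarTower.toAlgHom K _ _).comp (rename f))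
    ((IsFractionRing.injective _ _).comp (rename_injective f hf))

theorem fractionRingRename_algebraMap {σ τ : Type*} (f : σ → τ) (hf : Function.Injective f)
    (p : MvPolynomial σ K) :
    fractionRingRename K f hf (algebraMap _ _ p) = algebraMap _ _ (rename f p) :=
  (IsFractionRing.liftAlgHom_apply _ _).trans (IsFractionRing.lift_algebraMap _ _)

theorem edgeBinoms_map {f : V → W} (hf : Function.Injective f) (G : SimpleGraph V) :
    edgeBinoms K (G.map f) =
      fractionRingRename K (Sum.map f f) (hf.sumMap hf) '' edgeBinoms K G := by
  ext z
  simp only [edgeBinoms_eq, SimpleGraph.map_adj', Set.mem_ofPred_eq, Set.mem_image]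
  constructor
  · rintro ⟨-, -, ⟨-, a, b, hab, rfl, rfl⟩, rfl⟩
    exact ⟨_, ⟨a, b, hab, rfl⟩, by simp [edgeBinom, fractionRingRename_algebraMap]⟩
  · rintro ⟨-, ⟨a, b, hab, rfl⟩, rfl⟩
    exact ⟨f a, f b, ⟨hf.ne hab.ne, a, b, hab, rfl, rfl⟩,
      by simp [edgeBinom, fractionRingRename_algebraMap]⟩

theorem spread_eq_trdeg (G : SimpleGraph V) :
    spread K G = Algebra.trdeg K (adjoin K (edgeBinoms K G)) := rfl

theorem spread_map {f : V → W} (hf : Function.Injective f) (G : SimpleGraph V) :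
    spread K (G.map f) = spread K G := by
  rw [spread_eq_trdeg, spread_eq_trdeg, edgeBinoms_map K hf, ← adjoin_map]
  exact (equivMap _ _).trdeg_eq.symm

theorem algebraicIndependent_algebraMap_X_fractionRing (σ : Type*) :
    AlgebraicIndependent K fun v : σ ↦
      algebraMap (MvPolynomial σ K) (FractionRing (MvPolynomial σ K)) (X v) :=
  (algebraicIndependent_X σ K).map' (f := IsScalarTower.toAlgHom K _ _)
    (IsFractionRing.injective _ _)

theorem transcendental_edgeBinom {H : SimpleGraph V} {a v : V} (hv : ∀ w, ¬ H.Adj v w)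
    (hav : a ≠ v) : Transcendental (adjoin K (edgeBinoms K H)) (edgeBinom K a v) := by
  set x := fun u : V ⊕ V ↦
    algebraMap (MvPolynomial (V ⊕ V) K) (FractionRing (MvPolynomial (V ⊕ V) K)) (X u)
  set M := adjoin K (x '' {Sum.inr v}ᶜ)
  have hx_mem : ∀ u, u ≠ Sum.inr v → x u ∈ M :=
    fun u hu ↦ subset_adjoin K _ ⟨u, hu, rfl⟩
  have hy : Transcendental M (x (Sum.inr v)) :=
    transcendental_adjoin_iff.2 <|
      (algebraicIndependent_algebraMap_X_fractionRing K _).transcendental_adjoin (by simp)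
  let b : M := ⟨x (Sum.inl a), hx_mem _ (by simp)⟩
  let c : M := ⟨x (Sum.inl v) * x (Sum.inr a),
    mul_mem (hx_mem _ (by simp)) (hx_mem _ (by simpa using hav))⟩
  have hb : b ≠ 0 := by simp [b, x, Subtype.ext_iff, X_ne_zero]
  have hM : Transcendental M (edgeBinom K a v) := by
    have heq : edgeBinom K a v = algebraMap M _ b * x (Sum.inr v) - algebraMap M _ c := by
      simp [edgeBinom, x, b, c]
    rw [heq]
    exact hy.algebraMap_mul_sub hb c
  have hle : adjoin K (edgeBinoms K H) ≤ M := by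
    rw [adjoin_le_iff, edgeBinoms_eq]
    rintro _ ⟨p, q, hpq, rfl⟩
    have hp : p ≠ v := by rintro rfl; exact hv q hpq
    have hq : q ≠ v := by rintro rfl; exact hv p hpq.symm
    rw [edgeBinom, map_sub, map_mul, map_mul]
    exact sub_mem (mul_mem (hx_mem _ (by simp)) (hx_mem _ (by simpa using hq)))
      (mul_mem (hx_mem _ (by simp)) (hx_mem _ (by simpa using hp)))
  exact Transcendental.of_tower_top_of_subalgebra_le
    (A := (adjoin K (edgeBinoms K H)).toSubalgebra) (B := M.toSubalgebra) hle hM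

end EdgeBinomials

theorem spread_add_leaf_general
    (K : Type) [Field K] (n : ℕ)
    (G : SimpleGraph (Fin n)) (i : Fin n)
    (G' : SimpleGraph (Fin (n + 1)))
    (hG' : G' = (G.map Fin.castSucc) ⊔
      SimpleGraph.fromEdgeSet {s(Fin.castSucc i, Fin.last n)}) :
    spread K G' = spread K G + 1 := by
  have hne : Fin.castSucc i ≠ Fin.last n := (Fin.castSucc_lt_last i).ne
  have hleaf : ∀ w, ¬ (G.map Fin.castSucc).Adj (Fin.last n) w := by
    rintro w ⟨-, a, b, -, ha, -⟩
    exact (Fin.castSucc_lt_last a).ne ha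
  rw [spread_eq_trdeg, hG', edgeBinoms_sup, edgeBinoms_fromEdgeSet_singleton K hne,
    adjoin_union_pair_neg, trdeg_adjoin_insert_of_transcendental
      (transcendental_edgeBinom K hleaf hne), ← spread_eq_trdeg,
    spread_map K (Fin.castSucc_injective n)]

/-- Adding a leaf increases the analytic spread of the binomial edge ideal by exactly one:
if `G'` is obtained from a nonempty graph `G` on vertices `{0,…,n−1}` by adding a new vertex
`n` and the single new edge `{i, n}`, then `ℓ(J_{G'}) = ℓ(J_G) + 1`. -/
theorem spread_add_leaf
    (K : Type) [Field K] [Infinite K] (n : ℕ) (hn : 1 ≤ n)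
    (G : SimpleGraph (Fin n)) (i : Fin n)
    (G' : SimpleGraph (Fin (n + 1)))
    (hG' : G' = (G.map Fin.castSucc) ⊔
      SimpleGraph.fromEdgeSet {s(Fin.castSucc i, Fin.last n)}) :
    spread K G' = spread K G + 1 :=
  spread_add_leaf_general K n G i G' hG'
end

section
/- If T is a tree (a connected acyclic finite simple graph), then ℓ(J_T) = |E(T)|, i.e., the analytic spread of the binomial edge ideal of a tree equals its number of edges. Equivalently, the binomials {x_i y_j − x_j y_i : {i,j} ∈ E(T)} are algebraically independent over K. -/
open MvPolynomial

/-!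
Specialising every `y_v` to `-1` sends the binomial of an edge `{i, j}` to the linear form
`x_j - x_i`. In a tree rooted at `r`, these forms together with `x_r` generate the whole
polynomial ring (walk out from the root), and there are `|E| + 1 = |V|` of them, so they form a
transcendence basis. Hence the edge binomials are algebraically independent, and the field they
generate has transcendence degree `|E|`. The sign with which an edge is oriented (here by
`Sym2.out`) does not change the field generated.
-/

universe u

open Cardinal

theorem Sym2.mk_out {α : Type*} (e : Sym2 α) : s(e.out.1, e.out.2) = e :=
  e.out_eq

theorem Sym2.out_mk_eq_or_swap {α : Type*} (i j : α) :
    s(i, j).out = (i, j) ∨ s(i, j).out = (j, i) := by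
  rcases Sym2.eq_iff.mp (Sym2.mk_out s(i, j)) with ⟨h1, h2⟩ | ⟨h1, h2⟩
  · exact Or.inl (Prod.ext h1 h2)
  · exact Or.inr (Prod.ext h1 h2)

theorem MvPolynomial.trdeg_fractionRing {ι K : Type u} [Field K] :
    Algebra.trdeg K (FractionRing (MvPolynomial ι K)) = #ι := by
  have := IsLocalization.isAlgebraic (FractionRing (MvPolynomial ι K))
    (nonZeroDivisors (MvPolynomial ι K))
  exact ((IsTranscendenceBasis.mvPolynomial ι K).algebraMap_comp
    (A := FractionRing (MvPolynomial ι K))).cardinalMk_eq_trdeg.symm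

theorem AlgebraicIndependent.trdeg_adjoin_range {ι F E : Type u} [Field F] [Field E]
    [Algebra F E] {x : ι → E} (hx : AlgebraicIndependent F x) :
    Algebra.trdeg F (IntermediateField.adjoin F (Set.range x)) = #ι := by
  rw [← hx.aevalEquivField.trdeg_eq, MvPolynomial.trdeg_fractionRing]

namespace SimpleGraph

variable {V : Type u} {G : SimpleGraph V}

theorem Reachable.sub_mem_of_forall_adj {M : Type*} [AddGroup M] {S : AddSubgroup M}
    {f : V → M} (hf : ∀ ⦃i j⦄, G.Adj i j → f i - f j ∈ S) {u v : V} (h : G.Reachable u v) :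
    f u - f v ∈ S := by
  obtain ⟨p⟩ := h
  induction p with
  | nil => simp
  | cons hadj _ ih => simpa using S.add_mem (hf hadj) ih

theorem IsTree.card_edgeSet_add_one [Finite V] (hG : G.IsTree) :
    Nat.card G.edgeSet + 1 = Nat.card V := by
  have := Fintype.ofFinite V
  classical
  rw [Nat.card_eq_fintype_card, Nat.card_eq_fintype_card, ← edgeFinset_card]
  exact hG.card_edgeFinset

theorem IsTree.isTranscendenceBasis_X_sub_X (K : Type u) [Field K] [Finite V] (hG : G.IsTree)
    (r : V) :
    IsTranscendenceBasis K
      (fun o : Option G.edgeSet => o.elim (X r) fun e => X e.1.out.2 - X e.1.out.1 :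
        Option G.edgeSet → MvPolynomial V K) := by
  set z : Option G.edgeSet → MvPolynomial V K :=
    fun o => o.elim (X r) fun e => X e.1.out.2 - X e.1.out.1
  set S := Algebra.adjoin K (Set.range z)
  have hX : ∀ v, X v ∈ S := by
    have hsub : ∀ ⦃i j⦄, G.Adj i j →
        (X i - X j : MvPolynomial V K) ∈ S.toSubring.toAddSubgroup := by
      intro i j hij
      have he : z (some ⟨s(i, j), hij⟩) ∈ S := Algebra.subset_adjoin ⟨_, rfl⟩
      rcases Sym2.out_mk_eq_or_swap i j with h | h
      · simpa [z, h] using S.neg_mem he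
      · simpa [z, h] using he
    intro v
    simpa [z] using S.sub_mem (Algebra.subset_adjoin ⟨none, rfl⟩ : z none ∈ S)
      ((hG.connected r v).sub_mem_of_forall_adj hsub)
  have hS : S = ⊤ := eq_top_iff.mpr <| adjoin_range_X (R := K) ▸ Algebra.adjoin_le
    (Set.range_subset_iff.mpr hX)
  have : Algebra.IsAlgebraic S (MvPolynomial V K) := by
    have := Algebra.isIntegral_of_surjective (R := S) (B := MvPolynomial V K)
      fun p => ⟨⟨p, hS ▸ Algebra.mem_top⟩, rfl⟩
    infer_instance
  refine Algebra.IsAlgebraic.isTranscendenceBasis_of_le_trdeg_of_finite K z ?_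
  rw [MvPolynomial.trdeg_of_isDomain, lift_id, ← Nat.cast_card, ← Nat.cast_card,
    Finite.card_option, hG.card_edgeSet_add_one]

noncomputable def edgeBinomial (K : Type*) [CommRing K] (i j : V) : MvPolynomial (V ⊕ V) K :=
  X (Sum.inl i) * X (Sum.inr j) - X (Sum.inl j) * X (Sum.inr i)

theorem edgeBinomial_swap (K : Type*) [CommRing K] (i j : V) :
    edgeBinomial K j i = -edgeBinomial K i j := by
  simp only [edgeBinomial]
  ring

theorem IsTree.algebraicIndependent_edgeBinomial (K : Type u) [Field K] [Finite V]
    (hG : G.IsTree) :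
    AlgebraicIndependent K fun e : G.edgeSet => edgeBinomial K e.1.out.1 e.1.out.2 := by
  obtain ⟨r⟩ := hG.connected.nonempty
  let ψ : MvPolynomial (V ⊕ V) K →ₐ[K] MvPolynomial V K := aeval (Sum.elim X fun _ => -1)
  refine AlgebraicIndependent.of_comp ψ ?_
  convert (hG.isTranscendenceBasis_X_sub_X K r).1.comp some (Option.some_injective _) using 1
  funext e
  simp only [Function.comp_apply, Option.elim_some, ψ, edgeBinomial, map_sub, map_mul, aeval_X,
    Sum.elim_inl, Sum.elim_inr]
  ring

theorem adjoin_edgeBinoms (K : Type) [Field K] {V : Type} (G : SimpleGraph V) :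
    IntermediateField.adjoin K (edgeBinoms K G) = IntermediateField.adjoin K (Set.range
      fun e : G.edgeSet => algebraMap (MvPolynomial (V ⊕ V) K)
        (FractionRing (MvPolynomial (V ⊕ V) K)) (edgeBinomial K e.1.out.1 e.1.out.2)) := by
  apply le_antisymm <;> rw [IntermediateField.adjoin_le_iff]
  · rintro _ ⟨i, j, hij, rfl⟩
    have he := IntermediateField.subset_adjoin K _
      (Set.mem_range_self (f := fun e : G.edgeSet => algebraMap (MvPolynomial (V ⊕ V) K)
        (FractionRing (MvPolynomial (V ⊕ V) K)) (edgeBinomial K e.1.out.1 e.1.out.2))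
        ⟨s(i, j), hij⟩)
    rcases Sym2.out_mk_eq_or_swap i j with h | h
    · simp only [h, SetLike.mem_coe] at he
      exact he
    · simp only [h, edgeBinomial_swap K i j, map_neg, SetLike.mem_coe] at he
      have := neg_mem he
      rwa [neg_neg] at this
  · rintro _ ⟨e, rfl⟩
    refine IntermediateField.subset_adjoin K _ ⟨e.1.out.1, e.1.out.2, ?_, rfl⟩
    rw [← mem_edgeSet, Sym2.mk_out]
    exact e.2

end SimpleGraph

theorem spread_tree_general
    (K : Type) [Field K] (n : ℕ) (T : SimpleGraph (Fin n))
    (hconn : T.Connected) (hacyc : T.IsAcyclic) :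
    spread K T = (T.edgeSet.ncard : Cardinal) := by
  have hind := (SimpleGraph.IsTree.algebraicIndependent_edgeBinomial K ⟨hconn, hacyc⟩).map'
    (f := IsScalarTower.toAlgHom K _ (FractionRing (MvPolynomial (Fin n ⊕ Fin n) K)))
    (IsFractionRing.injective _ _)
  rw [spread, SimpleGraph.adjoin_edgeBinoms]
  -- `trdeg` is definitionally Mathlib's `Algebra.trdeg`
  exact (hind.trdeg_adjoin_range).trans (Set.cast_ncard T.edgeSet.toFinite).symm

/-- If `T` is a tree (connected and acyclic), then the analytic spread of its binomial edge
ideal equals its number of edges. -/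
theorem spread_tree
    (K : Type) [Field K] [Infinite K] (n : ℕ) (T : SimpleGraph (Fin n))
    (hconn : T.Connected) (hacyc : T.IsAcyclic) :
    spread K T = (T.edgeSet.ncard : Cardinal) :=
  spread_tree_general K n T hconn hacyc
end

section
/- Let F_1, ..., F_s be algebraically independent elements of S = K[x_1,...,x_n,y_1,...,y_n], suppose the variables x_n, y_n do not appear in any F_i, and let L = x_n(x_i − y_i) for some i < n with x_i ≠ y_i as variables. Then F_1, ..., F_s, L are algebraically independent over K. -/
open MvPolynomial

/-!
Every `F k` lies in the subalgebra `S` of polynomials not involving `xₙ`. Over `S` the variable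
`xₙ` is transcendental, hence so is its multiple `L = xₙ • (xᵢ - yᵢ)` by the nonzero element
`xᵢ - yᵢ` of the domain `S`; a fortiori `L` is transcendental over the smaller algebra generated
by the `F k`, which is exactly what is needed to extend an algebraically independent family.
-/

theorem AlgebraicIndependent.fin_snoc {R A : Type*} [CommRing R] [CommRing A] [Algebra R A]
    {s : ℕ} {x : Fin s → A} (hx : AlgebraicIndependent R x) {a : A}
    (ha : Transcendental (Algebra.adjoin R (Set.range x)) a) :
    AlgebraicIndependent R (Fin.snoc x a : Fin (s + 1) → A) := by
  have hopt : AlgebraicIndependent R (fun o : Option (Fin s) => o.elim a x) :=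
    (hx.option_iff_transcendental a).2 ha
  convert hopt.comp finSuccEquivLast finSuccEquivLast.injective using 1
  funext j
  induction j using Fin.lastCases <;> simp

theorem MvPolynomial.transcendental_supported_X_mul {σ R : Type*} [CommRing R] [IsDomain R]
    {s : Set σ} {i : σ} (hi : i ∉ s) {a : MvPolynomial σ R} (ha : a ∈ supported R s)
    (ha0 : a ≠ 0) : Transcendental (supported R s) (X i * a) := by
  have ha' : (⟨a, ha⟩ : supported R s) ∈ nonZeroDivisors (supported R s) :=
    mem_nonZeroDivisors_of_ne_zero fun h ↦ ha0 (congrArg Subtype.val h)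
  rw [mul_comm]
  exact fun h ↦ transcendental_supported_X R hi (h.of_smul ha')

theorem algebraicIndependent_snoc_last_times_diff_general
    (K : Type) [Field K] (n s : ℕ)
    (F : Fin s → MvPolynomial (Fin (n + 1) ⊕ Fin (n + 1)) K)
    (hF : AlgebraicIndependent K F)
    (hx : ∀ k, Sum.inl (Fin.last n) ∉ (F k).vars)
    (i : Fin n)
    (L : MvPolynomial (Fin (n + 1) ⊕ Fin (n + 1)) K)
    (hL : L = X (Sum.inl (Fin.last n)) *
      (X (Sum.inl (Fin.castSucc i)) - X (Sum.inr (Fin.castSucc i)))) :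
    AlgebraicIndependent K (Fin.snoc F L) := by
  set S := supported K {v | v ≠ Sum.inl (Fin.last n)}
  have hFS : Algebra.adjoin K (Set.range F) ≤ S := by
    refine Algebra.adjoin_le ?_
    rintro _ ⟨k, rfl⟩
    exact mem_supported.2 fun v hv ↦ ne_of_mem_of_not_mem hv (hx k)
  have hdiff : X (Sum.inl (Fin.castSucc i)) - X (Sum.inr (Fin.castSucc i)) ∈ S :=
    sub_mem (X_mem_supported.2 (by simp [Fin.castSucc_ne_last]))
      (X_mem_supported.2 Sum.inr_ne_inl)
  have hdiff0 : X (Sum.inl (Fin.castSucc i)) - X (Sum.inr (Fin.castSucc i)) ≠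
      (0 : MvPolynomial (Fin (n + 1) ⊕ Fin (n + 1)) K) :=
    sub_ne_zero.2 ((X_injective (R := K)).ne Sum.inl_ne_inr)
  refine hF.fin_snoc (Transcendental.of_tower_top_of_subalgebra_le hFS ?_)
  rw [hL]
  exact transcendental_supported_X_mul (by simp) hdiff hdiff0

/-- Key step in the leaf-addition argument: if `F₁,…,F_s ∈ S = K[x₀,…,xₙ,y₀,…,yₙ]` are
algebraically independent over `K` and none of them involves the variables `xₙ` or `yₙ`, then
for any `i < n` the polynomials `F₁,…,F_s, xₙ(xᵢ − yᵢ)` are algebraically independent over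
`K`.  (The `Sum.inl` variables are the `x`s and the `Sum.inr` variables the `y`s.) -/
theorem algebraicIndependent_snoc_last_times_diff
    (K : Type) [Field K] [Infinite K] (n s : ℕ)
    (F : Fin s → MvPolynomial (Fin (n + 1) ⊕ Fin (n + 1)) K)
    (hF : AlgebraicIndependent K F)
    (hx : ∀ k, Sum.inl (Fin.last n) ∉ (F k).vars)
    (hy : ∀ k, Sum.inr (Fin.last n) ∉ (F k).vars)
    (i : Fin n)
    (L : MvPolynomial (Fin (n + 1) ⊕ Fin (n + 1)) K)
    (hL : L = X (Sum.inl (Fin.last n)) *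
      (X (Sum.inl (Fin.castSucc i)) - X (Sum.inr (Fin.castSucc i)))) :
    AlgebraicIndependent K (Fin.snoc F L) :=
  algebraicIndependent_snoc_last_times_diff_general K n s F hF hx i L hL
end
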